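/- For θ ∈ [0, π/2] let |ψ_low(θ)⟩ := cos(θ/2)|+⟩|+⟩ + i·sin(θ/2)|−⟩|−⟩ где |±⟩ := (|0⟩±|1⟩)/√2, let Ω ∈ [0, 4/3], and let q_N ∈ [0,1]. Applying the composed channel D_{q_N}∘E³_Ω to each qubit (modeling port-based entanglement teleportation of the state through a resource affected by phase-flip noise) yields M[((D_{q_N}∘E³_Ω) ⊗ (D_{q_N}∘E³_Ω))(|ψ_low(θ)⟩⟨ψ_low(θ)|)] = max(0, q_N²·M_low − (1−q_N²)/2), where M_low := max(0, sin θ·|1−3Ω/2| + (1/2)(1−3Ω/2)² − 1/2). -/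

import Mathlib

open Matrix Kronecker
open scoped ComplexOrder

noncomputable section

/-- 2×2 complex matrices (one qubit). -/
abbrev Mat2 := Matrix (Fin 2) (Fin 2) ℂ

/-- 4×4 complex matrices indexed by `(Fin 2) × (Fin 2)` (two qubits). -/
abbrev Mat4 := Matrix (Fin 2 × Fin 2) (Fin 2 × Fin 2) ℂ

/-- The identity and the three Pauli matrices: σ₀, σ₁, σ₂, σ₃. -/
def pauli : Fin 4 → Mat2 :=
  ![1, !![0, 1; 1, 0], !![0, -Complex.I; Complex.I, 0], !![1, 0; 0, -1]]

/-- Weights `(p₀, p₁, p₂, p₃)` with `p₀ := 4 - (p₁ + p₂ + p₃)`. -/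
def pw (p : Fin 3 → ℝ) : Fin 4 → ℝ := ![4 - (p 0 + p 1 + p 2), p 0, p 1, p 2]

/-- Single-qubit Pauli channel `E_p(ρ) = Σ_k (p_k/4) σ_k ρ σ_k`. -/
def pauliCh (p : Fin 3 → ℝ) (ρ : Mat2) : Mat2 :=
  ∑ k : Fin 4, ((pw p k / 4 : ℝ) : ℂ) • (pauli k * ρ * pauli k)

/-- `E_p ⊗ id` acting on two-qubit matrices. -/
def pauliFst (p : Fin 3 → ℝ) (ρ : Mat4) : Mat4 :=
  ∑ k : Fin 4, ((pw p k / 4 : ℝ) : ℂ) • ((pauli k ⊗ₖ 1) * ρ * (pauli k ⊗ₖ 1))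

/-- Local Pauli channel `E_p ⊗ E_p'` acting on two-qubit matrices. -/
def pauliLoc (p p' : Fin 3 → ℝ) (ρ : Mat4) : Mat4 :=
  ∑ k : Fin 4, ∑ l : Fin 4,
    ((pw p k * pw p' l / 16 : ℝ) : ℂ) •
      ((pauli k ⊗ₖ pauli l) * ρ * (pauli k ⊗ₖ pauli l))

/-- Partial transpose on the first qubit. -/
def ptranspose (ρ : Mat4) : Mat4 := fun x y => ρ (y.1, x.2) (x.1, y.2)

/-- Smallest (real) eigenvalue of a matrix. -/
def lambdaMin (A : Mat4) : ℝ :=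
  sInf {c : ℝ | ∃ v : Fin 2 × Fin 2 → ℂ, v ≠ 0 ∧ A *ᵥ v = (c : ℂ) • v}

/-- Measure of entanglement `M(ρ) = max (0, −2 λ_min(ρ^{T₁}))`. -/
def entMeasure (ρ : Mat4) : ℝ := max 0 (-2 * lambdaMin (ptranspose ρ))

/-- Two-qubit density matrix. -/
def IsDensity (ρ : Mat4) : Prop := ρ.PosSemidef ∧ ρ.trace = 1

/-- Depolarizing channel `D_q(ρ) = (1−q)·tr(ρ)·I/2 + q·ρ`. -/
def depol (q : ℝ) (ρ : Mat2) : Mat2 :=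
  (((1 - q : ℝ) : ℂ) * ρ.trace / 2) • (1 : Mat2) + ((q : ℝ) : ℂ) • ρ

/-- Basis vector `|ij⟩` of the two-qubit space. -/
def ket2 (i j : Fin 2) : (Fin 2 × Fin 2) → ℂ := fun x => if x = (i, j) then 1 else 0

/-- The four Bell states `|Ψ⁰⟩, |Ψ¹⟩, |Ψ²⟩, |Ψ³⟩`. -/
def bell : Fin 4 → ((Fin 2 × Fin 2) → ℂ) :=
  ![(((Real.sqrt 2 : ℝ) : ℂ))⁻¹ • (ket2 0 0 + ket2 1 1),
    (((Real.sqrt 2 : ℝ) : ℂ))⁻¹ • (ket2 0 1 + ket2 1 0),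
    (((Real.sqrt 2 : ℝ) : ℂ) * Complex.I)⁻¹ • (ket2 0 1 - ket2 1 0),
    (((Real.sqrt 2 : ℝ) : ℂ))⁻¹ • (ket2 0 0 - ket2 1 1)]

/-- Rank-one projector `|ψ⟩⟨ψ|`. -/
def proj (ψ : (Fin 2 × Fin 2) → ℂ) : Mat4 := fun a b => ψ a * (starRingEnd ℂ) (ψ b)

/-- Pauli-channel probability vector of the depolarizing channel `D_q`. -/
def depVec (q : ℝ) : Fin 3 → ℝ := fun _ => 1 - q

/-- Pauli-channel probability vector of the phase-flip channel `E³_Ω`. -/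
def phaseVec (Ω : ℝ) : Fin 3 → ℝ := ![0, 0, 3 * Ω]

/-- `|+⟩ = (|0⟩+|1⟩)/√2`. -/
def plusK : Fin 2 → ℂ := fun _ => (((Real.sqrt 2 : ℝ) : ℂ))⁻¹

/-- `|−⟩ = (|0⟩−|1⟩)/√2`. -/
def minusK : Fin 2 → ℂ := fun i =>
  if i = 0 then (((Real.sqrt 2 : ℝ) : ℂ))⁻¹ else -(((Real.sqrt 2 : ℝ) : ℂ))⁻¹

/-- The lower-bound state `|ψ_low(θ)⟩ = cos(θ/2)|+⟩|+⟩ + i sin(θ/2)|−⟩|−⟩`. -/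
def psiLow (θ : ℝ) : (Fin 2 × Fin 2) → ℂ := fun x =>
  ((Real.cos (θ / 2) : ℝ) : ℂ) * (plusK x.1 * plusK x.2) +
    Complex.I * ((Real.sin (θ / 2) : ℝ) : ℂ) * (minusK x.1 * minusK x.2)

def sg : Fin 2 → ℝ := fun i => if i = 0 then 1 else -1
@[simp] lemma sg_zero : sg 0 = 1 := rfl
@[simp] lemma sg_one : sg 1 = -1 := rfl

def Hm (p q r s : ℝ) (z w : ℂ) : Mat4 := fun x y =>
  ((p:ℂ) + (q:ℂ) * sg x.1 * sg x.2 * sg y.1 * sg y.2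
    + (r:ℂ) * sg x.2 * sg y.2 + (s:ℂ) * sg x.1 * sg y.1
    + z * sg x.1 * sg x.2 + (starRingEnd ℂ) z * sg y.1 * sg y.2
    + w * sg x.2 * sg y.1 + (starRingEnd ℂ) w * sg x.1 * sg y.2) / 4

set_option maxHeartbeats 1000000 in
lemma cpL1 (p q r s : ℝ) (z w : ℂ) :
    (pauli 1 ⊗ₖ (1:Mat2)) * Hm p q r s z w * (pauli 1 ⊗ₖ (1:Mat2)) =
    Hm p q r s (-z) (-w) := by
  funext x y
  obtain ⟨i, j⟩ := x; obtain ⟨a, b⟩ := y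
  rw [show pauli 1 = !![0, 1; 1, 0] from rfl]
  fin_cases i <;> fin_cases j <;> fin_cases a <;> fin_cases b <;>
  · simp only [Hm, sg_zero, sg_one, Matrix.mul_apply, Matrix.kroneckerMap_apply,
      Fintype.sum_prod_type, Fin.sum_univ_two, Matrix.of_apply, Matrix.cons_val',
      Matrix.cons_val_zero, Matrix.cons_val_one, Matrix.head_cons, Matrix.head_fin_const,
      Matrix.empty_val', Matrix.cons_val_fin_one, Complex.ofReal_one, Complex.ofReal_neg,
      Matrix.one_apply, Fin.isValue, Fin.zero_eta, Fin.mk_one, map_neg, Prod.mk.injEq,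
      reduceIte]
    try norm_num
    try ring_nf
    try simp only [Complex.I_sq, Complex.conj_conj]
    try ring_nf

set_option maxHeartbeats 1000000 in
lemma cpL2 (p q r s : ℝ) (z w : ℂ) :
    (pauli 2 ⊗ₖ (1:Mat2)) * Hm p q r s z w * (pauli 2 ⊗ₖ (1:Mat2)) =
    Hm s r q p (-w) (-z) := by
  funext x y
  obtain ⟨i, j⟩ := x; obtain ⟨a, b⟩ := y
  rw [show pauli 2 = !![0, -Complex.I; Complex.I, 0] from rfl]
  fin_cases i <;> fin_cases j <;> fin_cases a <;> fin_cases b <;>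
  · simp only [Hm, sg_zero, sg_one, Matrix.mul_apply, Matrix.kroneckerMap_apply,
      Fintype.sum_prod_type, Fin.sum_univ_two, Matrix.of_apply, Matrix.cons_val',
      Matrix.cons_val_zero, Matrix.cons_val_one, Matrix.head_cons, Matrix.head_fin_const,
      Matrix.empty_val', Matrix.cons_val_fin_one, Complex.ofReal_one, Complex.ofReal_neg,
      Matrix.one_apply, Fin.isValue, Fin.zero_eta, Fin.mk_one, map_neg, Prod.mk.injEq,
      reduceIte]
    try norm_num
    try ring_nf
    try simp only [Complex.I_sq, Complex.conj_conj]
    try ring_nf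

set_option maxHeartbeats 1000000 in
lemma cpL3 (p q r s : ℝ) (z w : ℂ) :
    (pauli 3 ⊗ₖ (1:Mat2)) * Hm p q r s z w * (pauli 3 ⊗ₖ (1:Mat2)) =
    Hm s r q p w z := by
  funext x y
  obtain ⟨i, j⟩ := x; obtain ⟨a, b⟩ := y
  rw [show pauli 3 = !![1, 0; 0, -1] from rfl]
  fin_cases i <;> fin_cases j <;> fin_cases a <;> fin_cases b <;>
  · simp only [Hm, sg_zero, sg_one, Matrix.mul_apply, Matrix.kroneckerMap_apply,
      Fintype.sum_prod_type, Fin.sum_univ_two, Matrix.of_apply, Matrix.cons_val',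
      Matrix.cons_val_zero, Matrix.cons_val_one, Matrix.head_cons, Matrix.head_fin_const,
      Matrix.empty_val', Matrix.cons_val_fin_one, Complex.ofReal_one, Complex.ofReal_neg,
      Matrix.one_apply, Fin.isValue, Fin.zero_eta, Fin.mk_one, map_neg, Prod.mk.injEq,
      reduceIte]
    try norm_num
    try ring_nf
    try simp only [Complex.I_sq, Complex.conj_conj]
    try ring_nf

set_option maxHeartbeats 1000000 in
lemma cpR1 (p q r s : ℝ) (z w : ℂ) :
    ((1:Mat2) ⊗ₖ pauli 1) * Hm p q r s z w * ((1:Mat2) ⊗ₖ pauli 1) =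
    Hm p q r s (-z) (-w) := by
  funext x y
  obtain ⟨i, j⟩ := x; obtain ⟨a, b⟩ := y
  rw [show pauli 1 = !![0, 1; 1, 0] from rfl]
  fin_cases i <;> fin_cases j <;> fin_cases a <;> fin_cases b <;>
  · simp only [Hm, sg_zero, sg_one, Matrix.mul_apply, Matrix.kroneckerMap_apply,
      Fintype.sum_prod_type, Fin.sum_univ_two, Matrix.of_apply, Matrix.cons_val',
      Matrix.cons_val_zero, Matrix.cons_val_one, Matrix.head_cons, Matrix.head_fin_const,
      Matrix.empty_val', Matrix.cons_val_fin_one, Complex.ofReal_one, Complex.ofReal_neg,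
      Matrix.one_apply, Fin.isValue, Fin.zero_eta, Fin.mk_one, map_neg, Prod.mk.injEq,
      reduceIte]
    try norm_num
    try ring_nf
    try simp only [Complex.I_sq, Complex.conj_conj]
    try ring_nf

set_option maxHeartbeats 1000000 in
lemma cpR2 (p q r s : ℝ) (z w : ℂ) :
    ((1:Mat2) ⊗ₖ pauli 2) * Hm p q r s z w * ((1:Mat2) ⊗ₖ pauli 2) =
    Hm r s p q (-((starRingEnd ℂ) w)) (-((starRingEnd ℂ) z)) := by
  funext x y
  obtain ⟨i, j⟩ := x; obtain ⟨a, b⟩ := y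
  rw [show pauli 2 = !![0, -Complex.I; Complex.I, 0] from rfl]
  fin_cases i <;> fin_cases j <;> fin_cases a <;> fin_cases b <;>
  · simp only [Hm, sg_zero, sg_one, Matrix.mul_apply, Matrix.kroneckerMap_apply,
      Fintype.sum_prod_type, Fin.sum_univ_two, Matrix.of_apply, Matrix.cons_val',
      Matrix.cons_val_zero, Matrix.cons_val_one, Matrix.head_cons, Matrix.head_fin_const,
      Matrix.empty_val', Matrix.cons_val_fin_one, Complex.ofReal_one, Complex.ofReal_neg,
      Matrix.one_apply, Fin.isValue, Fin.zero_eta, Fin.mk_one, map_neg, Prod.mk.injEq,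
      reduceIte]
    try norm_num
    try ring_nf
    try simp only [Complex.I_sq, Complex.conj_conj]
    try ring_nf

set_option maxHeartbeats 1000000 in
lemma cpR3 (p q r s : ℝ) (z w : ℂ) :
    ((1:Mat2) ⊗ₖ pauli 3) * Hm p q r s z w * ((1:Mat2) ⊗ₖ pauli 3) =
    Hm r s p q ((starRingEnd ℂ) w) ((starRingEnd ℂ) z) := by
  funext x y
  obtain ⟨i, j⟩ := x; obtain ⟨a, b⟩ := y
  rw [show pauli 3 = !![1, 0; 0, -1] from rfl]
  fin_cases i <;> fin_cases j <;> fin_cases a <;> fin_cases b <;>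
  · simp only [Hm, sg_zero, sg_one, Matrix.mul_apply, Matrix.kroneckerMap_apply,
      Fintype.sum_prod_type, Fin.sum_univ_two, Matrix.of_apply, Matrix.cons_val',
      Matrix.cons_val_zero, Matrix.cons_val_one, Matrix.head_cons, Matrix.head_fin_const,
      Matrix.empty_val', Matrix.cons_val_fin_one, Complex.ofReal_one, Complex.ofReal_neg,
      Matrix.one_apply, Fin.isValue, Fin.zero_eta, Fin.mk_one, map_neg, Prod.mk.injEq,
      reduceIte]
    try norm_num
    try ring_nf
    try simp only [Complex.I_sq, Complex.conj_conj]
    try ring_nf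

lemma cpPair (k l : Fin 4) (M : Mat4) :
    (pauli k ⊗ₖ pauli l) * M * (pauli k ⊗ₖ pauli l)
    = (pauli k ⊗ₖ (1:Mat2)) * (((1:Mat2) ⊗ₖ pauli l) * M * ((1:Mat2) ⊗ₖ pauli l)) *
      (pauli k ⊗ₖ (1:Mat2)) := by
  have h1 : (pauli k ⊗ₖ pauli l) = (pauli k ⊗ₖ (1:Mat2)) * ((1:Mat2) ⊗ₖ pauli l) := by
    rw [← Matrix.mul_kronecker_mul, Matrix.mul_one, Matrix.one_mul]
  have h2 : (pauli k ⊗ₖ pauli l) = ((1:Mat2) ⊗ₖ pauli l) * (pauli k ⊗ₖ (1:Mat2)) := by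
    rw [← Matrix.mul_kronecker_mul, Matrix.mul_one, Matrix.one_mul]
  nth_rewrite 1 [h1]
  rw [h2]
  simp only [Matrix.mul_assoc]

lemma psiLow_apply (θ : ℝ) (x : Fin 2 × Fin 2) :
    psiLow θ x = (((Real.cos (θ/2) : ℝ):ℂ)
      + Complex.I * ((Real.sin (θ/2) : ℝ):ℂ) * (sg x.1 : ℝ) * (sg x.2 : ℝ)) / 2 := by
  have h2 : ((Real.sqrt 2 : ℝ):ℂ) * ((Real.sqrt 2 : ℝ):ℂ) = 2 := by
    have h := Real.mul_self_sqrt (by norm_num : (0:ℝ) ≤ 2); exact_mod_cast h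
  have hr : (((Real.sqrt 2 : ℝ):ℂ))⁻¹ * (((Real.sqrt 2 : ℝ):ℂ))⁻¹ = 1/2 := by
    rw [← mul_inv, h2]; norm_num
  obtain ⟨i, j⟩ := x
  fin_cases i <;> fin_cases j <;>
    simp only [psiLow, plusK, minusK, sg, Fin.isValue, reduceIte, Fin.mk_one,
      Fin.mk_zero, one_ne_zero, if_false, if_true, Complex.ofReal_one,
      Complex.ofReal_neg, Fin.zero_eta, Fin.ext_iff, Fin.val_one, Fin.val_zero,
      show ((1:Fin 2) = 0) = False by simp] <;>
  first
    | linear_combination (((Real.cos (θ/2) : ℝ):ℂ) + Complex.I * ((Real.sin (θ/2) : ℝ):ℂ)) * hr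
    | linear_combination (((Real.cos (θ/2) : ℝ):ℂ) - Complex.I * ((Real.sin (θ/2) : ℝ):ℂ)) * hr

lemma L0 (θ : ℝ) : proj (psiLow θ) =
    Hm (Real.cos (θ/2) ^ 2) (Real.sin (θ/2) ^ 2) 0 0
      (Complex.I * ((Real.cos (θ/2) * Real.sin (θ/2) : ℝ):ℂ)) 0 := by
  funext x y
  simp only [proj, psiLow_apply, Hm, map_div₀, map_add, _root_.map_mul, Complex.conj_I,
    Complex.conj_ofReal, map_ofNat, map_zero, Complex.ofReal_mul, Complex.ofReal_pow,
    Complex.ofReal_zero]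
  ring_nf
  try simp only [Complex.I_sq]
  try ring_nf

lemma L1 (Ω e f g h : ℝ) (z w : ℂ) :
    pauliLoc (phaseVec Ω) (phaseVec Ω) (Hm e f g h z w) =
    Hm ((1-3*Ω/4)^2*e + (1-3*Ω/4)*(3*Ω/4)*(g+h) + (3*Ω/4)^2*f)
       ((1-3*Ω/4)^2*f + (1-3*Ω/4)*(3*Ω/4)*(g+h) + (3*Ω/4)^2*e)
       ((1-3*Ω/4)^2*g + (1-3*Ω/4)*(3*Ω/4)*(e+f) + (3*Ω/4)^2*h)
       ((1-3*Ω/4)^2*h + (1-3*Ω/4)*(3*Ω/4)*(e+f) + (3*Ω/4)^2*g)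
       ((((1-3*Ω/4)^2 : ℝ):ℂ)*z + (((1-3*Ω/4)*(3*Ω/4) : ℝ):ℂ)*(w + (starRingEnd ℂ) w)
          + (((3*Ω/4)^2 : ℝ):ℂ)*((starRingEnd ℂ) z))
       ((((1-3*Ω/4)^2 : ℝ):ℂ)*w + (((1-3*Ω/4)*(3*Ω/4) : ℝ):ℂ)*(z + (starRingEnd ℂ) z)
          + (((3*Ω/4)^2 : ℝ):ℂ)*((starRingEnd ℂ) w)) := by
  have e0 : pw (phaseVec Ω) 0 = 4 - 3*Ω := by simp [pw, phaseVec]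
  have e1 : pw (phaseVec Ω) 1 = 0 := by simp [pw, phaseVec]
  have e2 : pw (phaseVec Ω) 2 = 0 := by simp [pw, phaseVec]
  have e3 : pw (phaseVec Ω) 3 = 3*Ω := by simp [pw, phaseVec]
  simp only [pauliLoc, Fin.sum_univ_four, e0, e1, e2, e3, zero_mul, mul_zero, zero_div,
    Complex.ofReal_zero, zero_smul, add_zero, zero_add]
  rw [show pauli 0 = (1:Mat2) from rfl]
  simp only [Matrix.one_kronecker_one, Matrix.one_mul, Matrix.mul_one]
  simp only [cpPair, cpL3, cpR3, Complex.conj_conj]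
  funext x y
  simp only [Matrix.add_apply, Matrix.smul_apply, Hm, smul_eq_mul, map_add,
    _root_.map_mul, Complex.conj_ofReal, Complex.conj_conj, map_neg]
  push_cast
  ring_nf
  try simp only [Complex.I_sq, Complex.conj_conj]
  try ring_nf

lemma L2 (q e f g h : ℝ) (z w : ℂ) :
    pauliLoc (depVec q) (depVec q) (Hm e f g h z w) =
    Hm (((1+q)/2)^2*e + ((1+q)/2)*((1-q)/2)*(g+h) + ((1-q)/2)^2*f)
       (((1+q)/2)^2*f + ((1+q)/2)*((1-q)/2)*(g+h) + ((1-q)/2)^2*e)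
       (((1+q)/2)^2*g + ((1+q)/2)*((1-q)/2)*(e+f) + ((1-q)/2)^2*h)
       (((1+q)/2)^2*h + ((1+q)/2)*((1-q)/2)*(e+f) + ((1-q)/2)^2*g)
       (((q^2 : ℝ):ℂ)*z) (((q^2 : ℝ):ℂ)*w) := by
  have e0 : pw (depVec q) 0 = 1 + 3*q := by simp [pw, depVec]; ring
  have e1 : pw (depVec q) 1 = 1 - q := by simp [pw, depVec]
  have e2 : pw (depVec q) 2 = 1 - q := by simp [pw, depVec]
  have e3 : pw (depVec q) 3 = 1 - q := by simp [pw, depVec]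
  simp only [pauliLoc, Fin.sum_univ_four, e0, e1, e2, e3]
  rw [show pauli 0 = (1:Mat2) from rfl]
  simp only [Matrix.one_kronecker_one, Matrix.one_mul, Matrix.mul_one]
  simp only [cpPair, cpL1, cpL2, cpL3, cpR1, cpR2, cpR3, Complex.conj_conj, map_neg,
    neg_neg]
  funext x y
  simp only [Matrix.add_apply, Matrix.smul_apply, Hm, smul_eq_mul, map_add,
    _root_.map_mul, Complex.conj_ofReal, Complex.conj_conj, map_neg, neg_neg]
  push_cast
  ring_nf
  try simp only [Complex.I_sq, Complex.conj_conj]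
  try ring_nf

lemma pt_Hm (p q r s : ℝ) (z w : ℂ) :
    ptranspose (Hm p q r s z w) = Hm p q r s w z := by
  funext x y
  simp only [ptranspose, Hm]
  ring

lemma sInf_quad (a b c d : ℝ) :
    sInf ({a, b, c, d} : Set ℝ) = min a (min b (min c d)) := by
  have h1 : sInf ({c, d} : Set ℝ) = min c d := by
    rw [show ({c, d} : Set ℝ) = insert c {d} from rfl,
        csInf_insert ((Set.finite_singleton d).bddBelow) (Set.singleton_nonempty d),
        csInf_singleton]
  have h2 : sInf ({b, c, d} : Set ℝ) = min b (min c d) := by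
    rw [show ({b, c, d} : Set ℝ) = insert b {c, d} from rfl,
        csInf_insert ((Set.toFinite ({c, d} : Set ℝ)).bddBelow) ⟨c, by simp⟩, h1]
  rw [show ({a, b, c, d} : Set ℝ) = insert a {b, c, d} from rfl,
      csInf_insert ((Set.toFinite ({b, c, d} : Set ℝ)).bddBelow) ⟨b, by simp⟩, h2]

set_option maxHeartbeats 1000000 in
lemma lambdaMin_Hm (a1 a4 a2 b : ℝ) :
    lambdaMin (Hm a1 a4 a2 a2 0 (Complex.I * (b:ℂ))) =
    min a1 (min a4 (min (a2+b) (a2-b))) := by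
  have hset : {c : ℝ | ∃ v : Fin 2 × Fin 2 → ℂ, v ≠ 0 ∧
      (Hm a1 a4 a2 a2 0 (Complex.I * (b:ℂ))) *ᵥ v = (c:ℂ) • v}
      = ({a1, a4, a2+b, a2-b} : Set ℝ) := by
    apply Set.eq_of_subset_of_subset
    · rintro c ⟨v, hv0, hv⟩
      by_contra hc
      simp only [Set.mem_insert_iff, Set.mem_singleton_iff, not_or] at hc
      obtain ⟨h1, h4, hp, hm⟩ := hc
      have e1 := congr_fun hv ((0:Fin 2),(0:Fin 2))
      have e2 := congr_fun hv ((0:Fin 2),(1:Fin 2))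
      have e3 := congr_fun hv ((1:Fin 2),(0:Fin 2))
      have e4 := congr_fun hv ((1:Fin 2),(1:Fin 2))
      simp only [Matrix.mulVec, dotProduct, Fintype.sum_prod_type,
        Fin.sum_univ_two, Hm, sg_zero, sg_one, Pi.smul_apply, smul_eq_mul,
        Complex.ofReal_one, Complex.ofReal_neg, map_zero, _root_.map_mul,
        Complex.conj_I, Complex.conj_ofReal, mul_one, mul_zero, zero_mul,
        one_mul, neg_neg, mul_neg, neg_mul, zero_add, add_zero] at e1 e2 e3 e4
      have f1 : ((a1:ℂ) - (c:ℂ)) ≠ 0 := sub_ne_zero.mpr (by exact_mod_cast Ne.symm h1)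
      have f4 : ((a4:ℂ) - (c:ℂ)) ≠ 0 := sub_ne_zero.mpr (by exact_mod_cast Ne.symm h4)
      have fp : ((a2:ℂ) + (b:ℂ) - (c:ℂ)) ≠ 0 := by
        have : ((a2+b:ℝ):ℂ) ≠ ((c:ℝ):ℂ) := by exact_mod_cast Ne.symm hp
        push_cast at this
        exact sub_ne_zero.mpr this
      have fm : ((a2:ℂ) - (b:ℂ) - (c:ℂ)) ≠ 0 := by
        have : ((a2-b:ℝ):ℂ) ≠ ((c:ℝ):ℂ) := by exact_mod_cast Ne.symm hm
        push_cast at this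
        exact sub_ne_zero.mpr this
      have hS1 : ((a1:ℂ) - (c:ℂ)) *
          (v (0,0) + v (0,1) + v (1,0) + v (1,1)) = 0 := by
        linear_combination e1 + e2 + e3 + e4
      have hS2 : ((a4:ℂ) - (c:ℂ)) *
          (v (0,0) - v (0,1) - v (1,0) + v (1,1)) = 0 := by
        linear_combination e1 - e2 - e3 + e4
      have hX : (((a2:ℂ) + (b:ℂ) - (c:ℂ)) * ((a2:ℂ) - (b:ℂ) - (c:ℂ))) *
          (v (0,0) - v (0,1) + v (1,0) - v (1,1)) = 0 := by
        linear_combination (norm := (ring_nf; try simp only [Complex.I_sq]; try ring_nf))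
          ((a2:ℂ) - (c:ℂ)) * (e1 - e2 + e3 - e4) - Complex.I * (b:ℂ) * (e1 + e2 - e3 - e4)
      have hY : (((a2:ℂ) + (b:ℂ) - (c:ℂ)) * ((a2:ℂ) - (b:ℂ) - (c:ℂ))) *
          (v (0,0) + v (0,1) - v (1,0) - v (1,1)) = 0 := by
        linear_combination (norm := (ring_nf; try simp only [Complex.I_sq]; try ring_nf))
          ((a2:ℂ) - (c:ℂ)) * (e1 + e2 - e3 - e4) + Complex.I * (b:ℂ) * (e1 - e2 + e3 - e4)
      have hS1' := (mul_eq_zero.mp hS1).resolve_left f1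
      have hS2' := (mul_eq_zero.mp hS2).resolve_left f4
      have hX' := (mul_eq_zero.mp hX).resolve_left (mul_ne_zero fp fm)
      have hY' := (mul_eq_zero.mp hY).resolve_left (mul_ne_zero fp fm)
      have c00 : v ((0:Fin 2),(0:Fin 2)) = 0 := by linear_combination (hS1' + hS2' + hX' + hY')/4
      have c01 : v ((0:Fin 2),(1:Fin 2)) = 0 := by linear_combination (hS1' - hS2' - hX' + hY')/4
      have c10 : v ((1:Fin 2),(0:Fin 2)) = 0 := by linear_combination (hS1' - hS2' + hX' - hY')/4
      have c11 : v ((1:Fin 2),(1:Fin 2)) = 0 := by linear_combination (hS1' + hS2' - hX' - hY')/4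
      apply hv0
      funext x
      obtain ⟨i, j⟩ := x
      simp only [Pi.zero_apply]
      fin_cases i <;> fin_cases j
      · exact c00
      · exact c01
      · exact c10
      · exact c11
    · intro c hc
      simp only [Set.mem_insert_iff, Set.mem_singleton_iff] at hc
      rcases hc with rfl | rfl | rfl | rfl
      · refine ⟨fun _ => 1, fun h => by simpa using congr_fun h ((0:Fin 2),(0:Fin 2)), ?_⟩
        funext x
        obtain ⟨i, j⟩ := x
        fin_cases i <;> fin_cases j <;>
        · simp only [Matrix.mulVec, dotProduct, Fintype.sum_prod_type,
            Fin.sum_univ_two, Hm, sg_zero, sg_one, Pi.smul_apply, smul_eq_mul,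
            Complex.ofReal_one, Complex.ofReal_neg, map_zero, _root_.map_mul,
            Complex.conj_I, Complex.conj_ofReal, Fin.zero_eta, Fin.mk_one, Fin.isValue]
          push_cast
          ring_nf
          try simp only [Complex.I_sq]
          try ring_nf
      · refine ⟨fun x => ((sg x.1 : ℝ):ℂ) * ((sg x.2 : ℝ):ℂ),
          fun h => by simpa using congr_fun h ((0:Fin 2),(0:Fin 2)), ?_⟩
        funext x
        obtain ⟨i, j⟩ := x
        fin_cases i <;> fin_cases j <;>
        · simp only [Matrix.mulVec, dotProduct, Fintype.sum_prod_type,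
            Fin.sum_univ_two, Hm, sg_zero, sg_one, Pi.smul_apply, smul_eq_mul,
            Complex.ofReal_one, Complex.ofReal_neg, map_zero, _root_.map_mul,
            Complex.conj_I, Complex.conj_ofReal, Fin.zero_eta, Fin.mk_one, Fin.isValue]
          push_cast
          ring_nf
          try simp only [Complex.I_sq]
          try ring_nf
      · refine ⟨fun x => ((sg x.2 : ℝ):ℂ) - Complex.I * ((sg x.1 : ℝ):ℂ),
          fun h => ?_, ?_⟩
        · have h0 := congr_fun h ((0:Fin 2),(0:Fin 2))
          simp only [sg_zero, Complex.ofReal_one, mul_one, Pi.zero_apply] at h0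
          have : (1:ℂ) - Complex.I ≠ 0 := by
            intro hh
            have := congrArg Complex.im hh
            simp at this
          exact this h0
        · funext x
          obtain ⟨i, j⟩ := x
          fin_cases i <;> fin_cases j <;>
          · simp only [Matrix.mulVec, dotProduct, Fintype.sum_prod_type,
              Fin.sum_univ_two, Hm, sg_zero, sg_one, Pi.smul_apply, smul_eq_mul,
              Complex.ofReal_one, Complex.ofReal_neg, map_zero, _root_.map_mul,
              Complex.conj_I, Complex.conj_ofReal, Fin.zero_eta, Fin.mk_one, Fin.isValue]
            push_cast
            ring_nf
            try simp only [Complex.I_sq]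
            try ring_nf
      · refine ⟨fun x => ((sg x.2 : ℝ):ℂ) + Complex.I * ((sg x.1 : ℝ):ℂ),
          fun h => ?_, ?_⟩
        · have h0 := congr_fun h ((0:Fin 2),(0:Fin 2))
          simp only [sg_zero, Complex.ofReal_one, mul_one, Pi.zero_apply] at h0
          have : (1:ℂ) + Complex.I ≠ 0 := by
            intro hh
            have := congrArg Complex.im hh
            simp at this
          exact this h0
        · funext x
          obtain ⟨i, j⟩ := x
          fin_cases i <;> fin_cases j <;>
          · simp only [Matrix.mulVec, dotProduct, Fintype.sum_prod_type,
              Fin.sum_univ_two, Hm, sg_zero, sg_one, Pi.smul_apply, smul_eq_mul,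
              Complex.ofReal_one, Complex.ofReal_neg, map_zero, _root_.map_mul,
              Complex.conj_I, Complex.conj_ofReal, Fin.zero_eta, Fin.mk_one, Fin.isValue]
            push_cast
            ring_nf
            try simp only [Complex.I_sq]
            try ring_nf
  show sInf _ = _
  rw [hset, sInf_quad]

set_option maxHeartbeats 1600000 in
lemma rho_out (θ Ω q : ℝ) :
    pauliLoc (depVec q) (depVec q)
      (pauliLoc (phaseVec Ω) (phaseVec Ω) (proj (psiLow θ))) =
    Hm ((1+q)^2/4*((1-3*Ω/4)^2*Real.cos (θ/2)^2 + (3*Ω/4)^2*Real.sin (θ/2)^2)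
          + (1-q^2)/2*((1-3*Ω/4)*(3*Ω/4))*(Real.cos (θ/2)^2 + Real.sin (θ/2)^2)
          + (1-q)^2/4*((1-3*Ω/4)^2*Real.sin (θ/2)^2 + (3*Ω/4)^2*Real.cos (θ/2)^2))
       ((1+q)^2/4*((1-3*Ω/4)^2*Real.sin (θ/2)^2 + (3*Ω/4)^2*Real.cos (θ/2)^2)
          + (1-q^2)/2*((1-3*Ω/4)*(3*Ω/4))*(Real.cos (θ/2)^2 + Real.sin (θ/2)^2)
          + (1-q)^2/4*((1-3*Ω/4)^2*Real.cos (θ/2)^2 + (3*Ω/4)^2*Real.sin (θ/2)^2))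
       ((1+q^2)/2*((1-3*Ω/4)*(3*Ω/4))*(Real.cos (θ/2)^2 + Real.sin (θ/2)^2)
          + (1-q^2)/4*((1-3*Ω/4)^2+(3*Ω/4)^2)*(Real.cos (θ/2)^2 + Real.sin (θ/2)^2))
       ((1+q^2)/2*((1-3*Ω/4)*(3*Ω/4))*(Real.cos (θ/2)^2 + Real.sin (θ/2)^2)
          + (1-q^2)/4*((1-3*Ω/4)^2+(3*Ω/4)^2)*(Real.cos (θ/2)^2 + Real.sin (θ/2)^2))
       (Complex.I * ((q^2*(Real.cos (θ/2)*Real.sin (θ/2))*(1-3*Ω/2) : ℝ):ℂ))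
       0 := by
  rw [L0, L1, L2]
  funext x y
  simp only [Hm, map_add, _root_.map_mul, map_neg, map_zero, Complex.conj_I,
    Complex.conj_ofReal, Complex.conj_conj, mul_zero, zero_mul, add_zero, zero_add,
    neg_zero, neg_neg]
  push_cast
  ring_nf
  try simp only [Complex.I_sq]
  try ring_nf


set_option maxHeartbeats 1600000

/-- PBET lower bound — `D_{q_N} ∘ E³_Ω` on each qubit of the
state `|ψ_low(θ)⟩`. -/
theorem entMeasure_PBET_lower (θ Ω qN : ℝ)
    (hθ : θ ∈ Set.Icc (0 : ℝ) (Real.pi / 2)) (hΩ : Ω ∈ Set.Icc (0 : ℝ) (4/3))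
    (hqN : qN ∈ Set.Icc (0 : ℝ) 1) :
    entMeasure (pauliLoc (depVec qN) (depVec qN)
        (pauliLoc (phaseVec Ω) (phaseVec Ω) (proj (psiLow θ))))
      = max 0 (qN ^ 2 * max 0 (Real.sin θ * |1 - 3 * Ω / 2|
            + (1/2) * (1 - 3 * Ω / 2) ^ 2 - 1/2)
          - (1 - qN ^ 2) / 2) := by

  obtain ⟨hθ0, hθ2⟩ := hθ
  obtain ⟨hΩ0, hΩ1⟩ := hΩ
  obtain ⟨hq0, hq1⟩ := hqN
  have hπ := Real.pi_pos
  have hc : 0 ≤ Real.cos (θ/2) := Real.cos_nonneg_of_mem_Icc ⟨by linarith, by linarith⟩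
  have hs : 0 ≤ Real.sin (θ/2) := Real.sin_nonneg_of_nonneg_of_le_pi (by linarith) (by linarith)
  have hcs : Real.cos (θ/2)^2 + Real.sin (θ/2)^2 = 1 := Real.cos_sq_add_sin_sq _
  have hsin : Real.sin θ = 2*Real.sin (θ/2)*Real.cos (θ/2) := by
    have h := Real.sin_two_mul (θ/2)
    rw [show 2*(θ/2) = θ by ring] at h
    exact h
  rw [rho_out θ Ω qN]
  unfold entMeasure
  rw [pt_Hm, lambdaMin_Hm, hsin, hcs]
  simp only [mul_one]
  have hq2 : qN^2 ≤ 1 := by nlinarith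
  have hq2' : (0:ℝ) ≤ 1 - qN^2 := by nlinarith
  have huv : (0:ℝ) ≤ (1-3*Ω/4)*(3*Ω/4) := mul_nonneg (by linarith) (by linarith)
  have hA1 : (0:ℝ) ≤ (1+qN)^2/4*((1-3*Ω/4)^2*Real.cos (θ/2)^2 + (3*Ω/4)^2*Real.sin (θ/2)^2)
      + (1-qN^2)/2*((1-3*Ω/4)*(3*Ω/4))
      + (1-qN)^2/4*((1-3*Ω/4)^2*Real.sin (θ/2)^2 + (3*Ω/4)^2*Real.cos (θ/2)^2) := by
    have t1 : (0:ℝ) ≤ (1+qN)^2/4*((1-3*Ω/4)^2*Real.cos (θ/2)^2 + (3*Ω/4)^2*Real.sin (θ/2)^2) := by positivity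
    have t2 : (0:ℝ) ≤ (1-qN^2)/2*((1-3*Ω/4)*(3*Ω/4)) := mul_nonneg (by linarith) huv
    have t3 : (0:ℝ) ≤ (1-qN)^2/4*((1-3*Ω/4)^2*Real.sin (θ/2)^2 + (3*Ω/4)^2*Real.cos (θ/2)^2) := by positivity
    linarith
  have hA4 : (0:ℝ) ≤ (1+qN)^2/4*((1-3*Ω/4)^2*Real.sin (θ/2)^2 + (3*Ω/4)^2*Real.cos (θ/2)^2)
      + (1-qN^2)/2*((1-3*Ω/4)*(3*Ω/4))
      + (1-qN)^2/4*((1-3*Ω/4)^2*Real.cos (θ/2)^2 + (3*Ω/4)^2*Real.sin (θ/2)^2) := by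
    have t1 : (0:ℝ) ≤ (1+qN)^2/4*((1-3*Ω/4)^2*Real.sin (θ/2)^2 + (3*Ω/4)^2*Real.cos (θ/2)^2) := by positivity
    have t2 : (0:ℝ) ≤ (1-qN^2)/2*((1-3*Ω/4)*(3*Ω/4)) := mul_nonneg (by linarith) huv
    have t3 : (0:ℝ) ≤ (1-qN)^2/4*((1-3*Ω/4)^2*Real.cos (θ/2)^2 + (3*Ω/4)^2*Real.sin (θ/2)^2) := by positivity
    linarith
  have hA2 : (0:ℝ) ≤ (1+qN^2)/2*((1-3*Ω/4)*(3*Ω/4)) + (1-qN^2)/4*((1-3*Ω/4)^2+(3*Ω/4)^2) := by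
    have t1 : (0:ℝ) ≤ (1+qN^2)/2*((1-3*Ω/4)*(3*Ω/4)) := mul_nonneg (by positivity) huv
    have t2 : (0:ℝ) ≤ (1-qN^2)/4*((1-3*Ω/4)^2+(3*Ω/4)^2) := mul_nonneg (by linarith) (by positivity)
    linarith
  set A1r := (1+qN)^2/4*((1-3*Ω/4)^2*Real.cos (θ/2)^2 + (3*Ω/4)^2*Real.sin (θ/2)^2)
      + (1-qN^2)/2*((1-3*Ω/4)*(3*Ω/4))
      + (1-qN)^2/4*((1-3*Ω/4)^2*Real.sin (θ/2)^2 + (3*Ω/4)^2*Real.cos (θ/2)^2) with hA1def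
  set A4r := (1+qN)^2/4*((1-3*Ω/4)^2*Real.sin (θ/2)^2 + (3*Ω/4)^2*Real.cos (θ/2)^2)
      + (1-qN^2)/2*((1-3*Ω/4)*(3*Ω/4))
      + (1-qN)^2/4*((1-3*Ω/4)^2*Real.cos (θ/2)^2 + (3*Ω/4)^2*Real.sin (θ/2)^2) with hA4def
  set A2r := (1+qN^2)/2*((1-3*Ω/4)*(3*Ω/4)) + (1-qN^2)/4*((1-3*Ω/4)^2+(3*Ω/4)^2) with hA2def
  set Br := qN^2*(Real.cos (θ/2)*Real.sin (θ/2))*(1-3*Ω/2) with hBdef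
  have hBmin : min (A2r + Br) (A2r - Br) = A2r - |Br| := by
    rcases le_total 0 Br with h | h
    · rw [abs_of_nonneg h]; exact min_eq_right (by linarith)
    · rw [abs_of_nonpos h, sub_neg_eq_add]; exact min_eq_left (by linarith)
  rw [hBmin]
  have hcol : max 0 (-2 * min A1r (min A4r (A2r - |Br|))) = max 0 (-2 * (A2r - |Br|)) := by
    rcases le_total (A2r - |Br|) (min A1r A4r) with h | h
    · rw [min_eq_right (le_trans h (min_le_right A1r A4r)),
         min_eq_right (le_trans h (min_le_left A1r A4r))]
    · have h0 : (0:ℝ) ≤ min A1r A4r := le_min hA1 hA4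
      have hd : (0:ℝ) ≤ A2r - |Br| := le_trans h0 h
      have hmin0 : (0:ℝ) ≤ min A1r (min A4r (A2r - |Br|)) :=
        le_min hA1 (le_min hA4 hd)
      rw [max_eq_left (by linarith), max_eq_left (by linarith)]
  rw [hcol]
  have habs : |Br| = qN^2*(Real.cos (θ/2)*Real.sin (θ/2))*|1-3*Ω/2| := by
    rw [hBdef, abs_mul, abs_of_nonneg (by positivity : (0:ℝ) ≤ qN^2*(Real.cos (θ/2)*Real.sin (θ/2)))]
  rw [habs, hA2def]
  rcases le_or_gt 0 (2*Real.sin (θ/2)*Real.cos (θ/2) * |1 - 3*Ω/2|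
      + 1/2*(1 - 3*Ω/2)^2 - 1/2) with hXp | hXn
  · rw [max_eq_right (by linarith : (0:ℝ) ≤ 2*Real.sin (θ/2)*Real.cos (θ/2) * |1 - 3 * Ω / 2|
      + 1/2*(1 - 3 * Ω / 2)^2 - 1/2)]
    congr 1
    ring
  · rw [max_eq_left (by linarith : 2*Real.sin (θ/2)*Real.cos (θ/2) * |1 - 3 * Ω / 2|
      + 1/2*(1 - 3 * Ω / 2)^2 - 1/2 ≤ (0:ℝ))]
    have hstep := mul_le_mul_of_nonneg_left hXn.le (sq_nonneg qN)
    have hle : qN^2*(Real.cos (θ/2)*Real.sin (θ/2))*|1-3*Ω/2| ≤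
        (1+qN^2)/2*((1-3*Ω/4)*(3*Ω/4)) + (1-qN^2)/4*((1-3*Ω/4)^2+(3*Ω/4)^2) := by
      nlinarith [hstep, mul_nonneg hq2' huv,
        mul_nonneg hq2' (by positivity : (0:ℝ) ≤ (1-3*Ω/4)^2+(3*Ω/4)^2)]
    rw [max_eq_left (by linarith), max_eq_left (by nlinarith)]
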